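/- If γ: C → B(K) is a unital completely positive map on a unital C*-algebra C and b ∈ C satisfies γ(bb*) = γ(b)γ(b)*, and H ⊆ K is a closed subspace such that P_H γ(bb*)|_H = P_H γ(b) P_H γ(b)*|_H, then γ(b)* H ⊆ H. -/

import Mathlib

set_option synthInstance.maxHeartbeats 1000000
set_option maxHeartbeats 1000000

noncomputable section


/-- `PiLp 2` over a complete space is complete (definitional transfer from the Pi type). -/
instance piLp_completeSpace {K : Type*} [NormedAddCommGroup K] [CompleteSpace K] (n : ℕ) :
    CompleteSpace (PiLp 2 fun _ : Fin n => K) :=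
  inferInstance

/-- Amplification of a map `φ : C → B(K)` to `n × n` matrices over `C`, acting on the
Hilbert space direct sum `K ⊕ ⋯ ⊕ K` (`PiLp 2`). -/
def matAmp {C : Type*} {K : Type*} [NormedAddCommGroup K] [InnerProductSpace ℂ K]
    {n : ℕ} (φ : C → (K →L[ℂ] K)) (M : Matrix (Fin n) (Fin n) C) :
    (PiLp 2 fun _ : Fin n => K) →L[ℂ] (PiLp 2 fun _ : Fin n => K) :=
  (((PiLp.continuousLinearEquiv 2 ℂ fun _ : Fin n => K).symm :
      (∀ _ : Fin n, K) →L[ℂ] PiLp 2 fun _ : Fin n => K)) ∘L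
    (ContinuousLinearMap.pi fun i =>
      ∑ j, (φ (M i j)) ∘L ContinuousLinearMap.proj j) ∘L
    ((PiLp.continuousLinearEquiv 2 ℂ fun _ : Fin n => K :
      (PiLp 2 fun _ : Fin n => K) →L[ℂ] ∀ _ : Fin n, K))

/-- A map `γ : C → B(K)` on a `*`-algebra `C` is completely positive if each matrix
amplification maps positive matrices (those of the form `N* N`) to positive operators. -/
def IsCompletelyPositive {C : Type*} [Ring C] [StarRing C]
    {K : Type*} [NormedAddCommGroup K] [InnerProductSpace ℂ K] [CompleteSpace K]
    (γ : C → (K →L[ℂ] K)) : Prop :=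
  ∀ (n : ℕ) (M : Matrix (Fin n) (Fin n) C),
    (∃ N : Matrix (Fin n) (Fin n) C, M = N.conjTranspose * N) →
    (matAmp γ M).IsPositive

/-- The compression of an operator `T ∈ B(K)` to a subspace `H`: `P_H T |_H ∈ B(H)`. -/
def compress {K : Type*} [NormedAddCommGroup K] [InnerProductSpace ℂ K]
    (H : Submodule ℂ K) [H.HasOrthogonalProjection] (T : K →L[ℂ] K) : H →L[ℂ] H :=
  (H.orthogonalProjectionOnto) ∘L T ∘L H.subtypeL

open scoped ComplexInnerProductSpace

/-- If `γ : C → B(K)` is a unital completely positive map on a unital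
`C*`-algebra `C`, `b ∈ C` satisfies `γ(bb*) = γ(b)γ(b)*`, and `H ⊆ K` is a closed
subspace with `P_H γ(bb*)|_H = P_H γ(b) P_H γ(b)*|_H`, then `γ(b)* H ⊆ H`. -/
theorem cp_schwarz_equality_implies_invariance
    {C : Type*} [NormedRing C] [StarRing C] [CStarRing C] [NormedAlgebra ℂ C]
    [CompleteSpace C] [StarModule ℂ C]
    {K : Type*} [NormedAddCommGroup K] [InnerProductSpace ℂ K] [CompleteSpace K]
    (γ : C →ₗ[ℂ] (K →L[ℂ] K)) (hunital : γ 1 = 1)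
    (hcp : IsCompletelyPositive (γ : C → (K →L[ℂ] K)))
    (b : C) (hb : γ (b * star b) = γ b * star (γ b))
    (H : Submodule ℂ K) (hH : IsClosed (H : Set K)) [H.HasOrthogonalProjection]
    (hcompr : compress H (γ (b * star b)) = compress H (γ b) * compress H (star (γ b))) :
    ∀ x ∈ H, star (γ b) x ∈ H := by
  intro x hx
  set P := H.orthogonalProjectionOnto with hP
  set w : K := star (γ b) x with hw
  set z : K := w - ↑(P w) with hzdef
  have hzmem : z ∈ Hᗮ := Submodule.sub_starProjection_mem_orthogonal (K := H) w
  have hproj : ∀ u : K, ⟪x, (P u : K)⟫ = ⟪x, u⟫ := by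
    intro u
    have h0 : ⟪x, u - ↑(P u)⟫ = 0 :=
      Submodule.inner_right_of_mem_orthogonal hx (Submodule.sub_starProjection_mem_orthogonal (K := H) u)
    rw [inner_sub_right, sub_eq_zero] at h0
    exact h0.symm
  have key : ⟪x, (γ (b * star b)) x⟫ = ⟪x, (γ b) (↑(P w))⟫ := by
    have h1 := congrArg (fun T : H →L[ℂ] H => (⟪x, ((T ⟨x, hx⟩ : H) : K)⟫)) hcompr
    simp only [compress, ContinuousLinearMap.mul_apply, ContinuousLinearMap.comp_apply,
      Submodule.subtypeL_apply, Submodule.coe_subtype] at h1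
    rw [hproj, hproj] at h1
    exact h1
  have hadj : ∀ v : K, ⟪w, v⟫ = ⟪x, (γ b) v⟫ := by
    intro v
    rw [hw, ContinuousLinearMap.star_eq_adjoint, ContinuousLinearMap.adjoint_inner_left]
  have hz : ⟪z, z⟫ = 0 := by
    have h2 : ⟪(P w : K), z⟫ = 0 :=
      Submodule.inner_right_of_mem_orthogonal (P w).2 hzmem
    have h3 : ⟪x, (γ b) w⟫ = ⟪x, (γ (b * star b)) x⟫ := by
      rw [hb]; rfl
    calc ⟪z, z⟫ = ⟪w, z⟫ - ⟪(P w : K), z⟫ := by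
          rw [hzdef, inner_sub_left]
      _ = ⟪w, z⟫ := by rw [h2, sub_zero]
      _ = ⟪x, (γ b) z⟫ := hadj z
      _ = ⟪x, (γ b) w⟫ - ⟪x, (γ b) ↑(P w)⟫ := by
          rw [hzdef, map_sub, inner_sub_right]
      _ = 0 := by rw [h3, key, sub_self]
  have hz0 : z = 0 := inner_self_eq_zero.mp hz
  have hw2 : w = ↑(P w) := sub_eq_zero.mp hz0
  show w ∈ H
  rw [hw2]
  exact (P w).2
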